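/- Let C > 0, p > 0, G > 0, s ≥ 0, and t₀ ∈ ℝ, and let a : [t₀,∞) → ℝ be differentiable with a(t) > 0 for all t and a(t) → ∞ as t → ∞. Define S(t,χ) = C·(4π·χ²·a(t)²/G)^p + (4/3)·π·χ³·s. Suppose χ : [t₀,∞) → (0,∞) satisfies the extremality condition a(t)·∂S/∂t(t,χ(t)) − ∂S/∂χ(t,χ(t)) = 0 for all t ≥ t₀, and that S(t,χ(t)) converges to a finite positive limit S_max as t → ∞. Then χ(t)·a(t) → √((G/4π)·(S_max/C)^{1/p}) and a'(t)/a(t) → √((4π/G)·(C/S_max)^{1/p}) as t → ∞. -/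

import Mathlib

/-!
Write `X = A/G` for the horizon area `A = 4πχ²a²` and `m = (4/3)πχ³s` for the matter entropy.
Since `m ≥ 0`, the bound on the entropy bounds `X`, hence the physical horizon radius `χa`;
as `a → ∞` this forces `χ → 0`, so `m → 0` and `C X^p → S_max`, which fixes the limit of `χa`.
Differentiating `X^p` in `a` and in `χ` turns the extremality condition into
`χ a' = 1 + (3/2) m / (C p X^p)`, so `χ a' → 1` and `a'/a = χa'/(χa)` tends to the inverse
limiting radius.
-/

open Real Filter Topology

lemma tendsto_of_tendsto_rpow {α : Type*} {l : Filter α} {f : α → ℝ} {p c : ℝ} (hp : 0 < p)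
    (hf : ∀ᶠ x in l, 0 ≤ f x) (h : Tendsto (fun x => f x ^ p) l (𝓝 c)) :
    Tendsto f l (𝓝 (c ^ (1 / p))) := by
  refine ((Real.continuousAt_rpow_const c _ (Or.inr (by positivity))).tendsto.comp h).congr' ?_
  filter_upwards [hf] with x hx
  simp [← Real.rpow_mul hx, hp.ne']

lemma tendsto_zero_of_mul_le_of_tendsto_atTop {α : Type*} {l : Filter α} {f g : α → ℝ} {B : ℝ}
    (hf : ∀ᶠ x in l, 0 ≤ f x) (hfg : ∀ᶠ x in l, f x * g x ≤ B) (hg : Tendsto g l atTop) :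
    Tendsto f l (𝓝 0) := by
  refine tendsto_of_tendsto_of_tendsto_of_le_of_le' tendsto_const_nhds
    ((tendsto_const_nhds (x := B)).div_atTop hg) hf ?_
  filter_upwards [hfg, hg.eventually_gt_atTop 0] with x hx hgx
  exact (le_div_iff₀ hgx).mpr hx

lemma hasDerivAt_mul_sq_rpow {k p x : ℝ} (hkx : k * x ^ 2 ≠ 0) :
    HasDerivAt (fun y => (k * y ^ 2) ^ p) (2 * p * (k * x ^ 2) ^ p / x) x := by
  have hk : k ≠ 0 := left_ne_zero_of_mul hkx
  have hx : x ≠ 0 := by rintro rfl; simp at hkx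
  convert ((hasDerivAt_pow 2 x).const_mul k).rpow_const (p := p) (Or.inl hkx) using 1
  rw [Real.rpow_sub_one hkx]
  field_simp
  ring

noncomputable def horizonArea (χ a : ℝ) : ℝ := 4 * π * χ ^ 2 * a ^ 2

noncomputable def generalizedEntropy (C p G s χ a : ℝ) : ℝ :=
  C * (horizonArea χ a / G) ^ p + 4 / 3 * π * χ ^ 3 * s

lemma mul_eq_sqrt_horizonArea {G χ a : ℝ} (hG : 0 < G) (h : 0 ≤ χ * a) :
    χ * a = √(G / (4 * π) * (horizonArea χ a / G)) := by
  rw [← Real.sqrt_sq h]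
  congr 1
  unfold horizonArea
  field_simp

lemma horizonArea_div_nonneg {G χ a : ℝ} (hG : 0 ≤ G) : 0 ≤ horizonArea χ a / G := by
  unfold horizonArea
  positivity

lemma horizonArea_div_pos {G χ a : ℝ} (hG : 0 < G) (hχ : χ ≠ 0) (ha : a ≠ 0) :
    0 < horizonArea χ a / G := by
  unfold horizonArea
  positivity

section generalizedEntropy

variable {C p G s χ a : ℝ}

lemma hasDerivAt_generalizedEntropy_scale (hG : 0 < G) (hχ : χ ≠ 0) (ha : a ≠ 0) :
    HasDerivAt (generalizedEntropy C p G s χ)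
      (C * (2 * p * (horizonArea χ a / G) ^ p / a)) a := by
  have hX : 4 * π * χ ^ 2 / G * a ^ 2 = horizonArea χ a / G := by unfold horizonArea; ring
  have hfun : generalizedEntropy C p G s χ =
      fun a' => C * (4 * π * χ ^ 2 / G * a' ^ 2) ^ p + 4 / 3 * π * χ ^ 3 * s := by
    funext a'
    unfold generalizedEntropy horizonArea
    ring_nf
  rw [hfun, ← hX]
  exact ((hasDerivAt_mul_sq_rpow (hX.trans_ne (horizonArea_div_pos hG hχ ha).ne')).const_mul
    C).add_const _

lemma hasDerivAt_generalizedEntropy_radius (hG : 0 < G) (hχ : χ ≠ 0) (ha : a ≠ 0) :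
    HasDerivAt (fun χ' => generalizedEntropy C p G s χ' a)
      (C * (2 * p * (horizonArea χ a / G) ^ p / χ) + 4 * π * s * χ ^ 2) χ := by
  have hX : 4 * π * a ^ 2 / G * χ ^ 2 = horizonArea χ a / G := by unfold horizonArea; ring
  have hfun : (fun χ' => generalizedEntropy C p G s χ' a) =
      fun χ' => C * (4 * π * a ^ 2 / G * χ' ^ 2) ^ p + 4 / 3 * π * s * χ' ^ 3 := by
    funext χ'
    unfold generalizedEntropy horizonArea
    ring_nf
  rw [hfun, ← hX]
  exact (((hasDerivAt_mul_sq_rpow (hX.trans_ne (horizonArea_div_pos hG hχ ha).ne')).const_mul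
    C).add ((hasDerivAt_pow 3 χ).const_mul _)).congr_deriv (by ring)

lemma mul_le_sqrt_of_generalizedEntropy_le {B : ℝ} (hC : 0 < C) (hp : 0 < p) (hG : 0 < G)
    (hs : 0 ≤ s) (hχ : 0 ≤ χ) (ha : 0 ≤ a) (h : generalizedEntropy C p G s χ a ≤ B) :
    χ * a ≤ √(G / (4 * π) * (B / C) ^ (1 / p)) := by
  have hX : 0 ≤ horizonArea χ a / G := horizonArea_div_nonneg hG.le
  have hXp : (horizonArea χ a / G) ^ p ≤ B / C := by
    rw [le_div_iff₀ hC]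
    unfold generalizedEntropy at h
    nlinarith [show 0 ≤ 4 / 3 * π * χ ^ 3 * s by positivity]
  have hXB : horizonArea χ a / G ≤ (B / C) ^ (1 / p) := by
    rw [one_div, Real.le_rpow_inv_iff_of_pos hX ((Real.rpow_nonneg hX p).trans hXp) hp]
    exact hXp
  rw [mul_eq_sqrt_horizonArea hG (by positivity)]
  gcongr

end generalizedEntropy

lemma mul_deriv_eq_of_extremal {C p G s t χ : ℝ} {a : ℝ → ℝ} (hC : C ≠ 0) (hp : p ≠ 0)
    (hG : 0 < G) (ha : DifferentiableAt ℝ a t) (hat : a t ≠ 0) (hχ : χ ≠ 0)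
    (hext : a t * deriv (fun t' => generalizedEntropy C p G s χ (a t')) t -
      deriv (fun χ' => generalizedEntropy C p G s χ' (a t)) χ = 0) :
    χ * deriv a t = 1 + 2 * π * χ ^ 3 * s / (C * p * (horizonArea χ (a t) / G) ^ p) := by
  have hXp := Real.rpow_pos_of_pos (horizonArea_div_pos hG hχ hat) p
  have hT : HasDerivAt (fun t' => generalizedEntropy C p G s χ (a t'))
      (C * (2 * p * (horizonArea χ (a t) / G) ^ p / a t) * deriv a t) t :=
    (hasDerivAt_generalizedEntropy_scale hG hχ hat).comp t ha.hasDerivAt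
  rw [hT.deriv, (hasDerivAt_generalizedEntropy_radius hG hχ hat).deriv] at hext
  field_simp at hext ⊢
  linear_combination hext / 2

section Asymptotics

variable {ι : Type*} {l : Filter ι} {C p G s : ℝ} {a χ : ι → ℝ}

lemma tendsto_zero_of_generalizedEntropy_le {B : ℝ} (hC : 0 < C) (hp : 0 < p) (hG : 0 < G)
    (hs : 0 ≤ s) (hχ : ∀ᶠ t in l, 0 ≤ χ t) (ha : ∀ᶠ t in l, 0 ≤ a t) (ha_inf : Tendsto a l atTop)
    (hS : ∀ᶠ t in l, generalizedEntropy C p G s (χ t) (a t) ≤ B) :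
    Tendsto χ l (𝓝 0) := by
  refine tendsto_zero_of_mul_le_of_tendsto_atTop (B := √(G / (4 * π) * (B / C) ^ (1 / p))) hχ
    ?_ ha_inf
  filter_upwards [hχ, ha, hS] with t hχt hat hSt
  exact mul_le_sqrt_of_generalizedEntropy_le hC hp hG hs hχt hat hSt

lemma tendsto_horizonArea_div_rpow {Smax : ℝ} (hC : C ≠ 0) (hχ : Tendsto χ l (𝓝 0))
    (hS : Tendsto (fun t => generalizedEntropy C p G s (χ t) (a t)) l (𝓝 Smax)) :
    Tendsto (fun t => (horizonArea (χ t) (a t) / G) ^ p) l (𝓝 (Smax / C)) := by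
  have hmatter : Tendsto (fun t => 4 / 3 * π * χ t ^ 3 * s) l (𝓝 0) := by
    simpa using ((hχ.pow 3).const_mul (4 / 3 * π)).mul_const s
  have h := (hS.sub hmatter).const_mul C⁻¹
  rw [sub_zero, inv_mul_eq_div] at h
  refine h.congr fun t => ?_
  rw [generalizedEntropy, add_sub_cancel_right, inv_mul_cancel_left₀ hC]

lemma tendsto_mul_of_tendsto_horizonArea_div_rpow {L : ℝ} (hp : 0 < p) (hG : 0 < G)
    (hχa : ∀ᶠ t in l, 0 ≤ χ t * a t)
    (hX : Tendsto (fun t => (horizonArea (χ t) (a t) / G) ^ p) l (𝓝 L)) :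
    Tendsto (fun t => χ t * a t) l (𝓝 (√(G / (4 * π) * L ^ (1 / p)))) := by
  have hX' := tendsto_of_tendsto_rpow hp (.of_forall fun t => horizonArea_div_nonneg hG.le) hX
  refine (hX'.const_mul (G / (4 * π))).sqrt.congr' ?_
  filter_upwards [hχa] with t ht
  exact (mul_eq_sqrt_horizonArea hG ht).symm

end Asymptotics

/-- Generalized no-hair theorem with a power-law gravitational entropy
`f(A/G) = C·(A/G)^p`: the scale factor is still asymptotically de Sitter, with
Hubble constant `H = √((4π/G)·(C/S_max)^{1/p})`. -/
theorem stmt_19 (C p G s t₀ Smax : ℝ) (hC : 0 < C) (hp : 0 < p) (hG : 0 < G)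
    (hs : 0 ≤ s) (hSmax : 0 < Smax)
    (a : ℝ → ℝ)
    (ha_diff : ∀ t, t₀ ≤ t → DifferentiableAt ℝ a t)
    (ha_pos : ∀ t, t₀ ≤ t → 0 < a t)
    (ha_inf : Tendsto a atTop atTop)
    (S : ℝ → ℝ → ℝ)
    (hS : ∀ t χ, S t χ = C * (4 * π * χ ^ 2 * (a t) ^ 2 / G) ^ p + (4 / 3) * π * χ ^ 3 * s)
    (χ : ℝ → ℝ)
    (hχ_pos : ∀ t, t₀ ≤ t → 0 < χ t)
    (hext : ∀ t, t₀ ≤ t →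
      a t * deriv (fun t' => S t' (χ t)) t - deriv (fun c => S t c) (χ t) = 0)
    (hlim : Tendsto (fun t => S t (χ t)) atTop (nhds Smax)) :
    Tendsto (fun t => χ t * a t) atTop
      (nhds (Real.sqrt ((G / (4 * π)) * (Smax / C) ^ ((1:ℝ)/p)))) ∧
    Tendsto (fun t => deriv a t / a t) atTop
      (nhds (Real.sqrt ((4 * π / G) * (C / Smax) ^ ((1:ℝ)/p)))) := by
  obtain rfl : S = fun t χ => generalizedEntropy C p G s χ (a t) := funext₂ hS
  have hpos : ∀ᶠ t in atTop, 0 < χ t ∧ 0 < a t := by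
    filter_upwards [eventually_ge_atTop t₀] with t ht using ⟨hχ_pos t ht, ha_pos t ht⟩
  have hχ0 : Tendsto χ atTop (𝓝 0) :=
    tendsto_zero_of_generalizedEntropy_le hC hp hG hs (hpos.mono fun t h => h.1.le)
      (hpos.mono fun t h => h.2.le) ha_inf (hlim.eventually_le_const (lt_add_one Smax))
  have hXp := tendsto_horizonArea_div_rpow hC.ne' hχ0 hlim
  have hradius := tendsto_mul_of_tendsto_horizonArea_div_rpow hp hG
    (hpos.mono fun t h => (mul_pos h.1 h.2).le) hXp
  have hχa' : Tendsto (fun t => χ t * deriv a t) atTop (𝓝 1) := by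
    have hcorr := (((hχ0.pow 3).const_mul (2 * π)).mul_const s).div (hXp.const_mul (C * p))
      (by positivity)
    rw [zero_pow three_ne_zero, mul_zero, zero_mul, zero_div] at hcorr
    have h := hcorr.const_add 1
    rw [add_zero] at h
    refine h.congr' ?_
    filter_upwards [eventually_ge_atTop t₀] with t ht
    exact (mul_deriv_eq_of_extremal hC.ne' hp.ne' hG (ha_diff t ht) (ha_pos t ht).ne'
      (hχ_pos t ht).ne' (hext t ht)).symm
  have hHubble : (√(G / (4 * π) * (Smax / C) ^ ((1:ℝ) / p)))⁻¹ =
      √(4 * π / G * (C / Smax) ^ ((1:ℝ) / p)) := by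
    rw [← Real.sqrt_inv, mul_inv, inv_div, ← Real.inv_rpow (by positivity), inv_div]
  refine ⟨hradius, ?_⟩
  rw [← hHubble, ← one_div]
  refine (hχa'.div hradius (by positivity)).congr' ?_
  filter_upwards [hpos] with t ht
  exact mul_div_mul_left _ _ ht.1.ne'
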